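/- If H is a K_4-free graph that vertex-arrows (K_{2,2,3}, K_{2,2,3}), then the join G = K_1 + H is K_5-free and edge-arrows (J_4, J_4). Consequently F_e(J_4, J_4; 5) ≤ 1 + F_v(K_{2,2,3}, K_{2,2,3}; 4). -/

import Mathlib

open SimpleGraph

/-- `Copies G F S`: `G` contains a copy of `F` all of whose vertices lie in `S`. -/
def Copies {α β : Type*} (G : SimpleGraph α) (F : SimpleGraph β) (S : Set α) : Prop :=
  ∃ f : β ↪ α, (∀ a b, F.Adj a b → G.Adj (f a) (f b)) ∧ ∀ a, f a ∈ S

/-- `G` vertex-arrows the family `F` of graphs. -/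
def VArrows {α : Type*} (G : SimpleGraph α) {r : ℕ} {β : Fin r → Type*}
    (F : ∀ i, SimpleGraph (β i)) : Prop :=
  ∀ C : α → Fin r, ∃ i, Copies G (F i) {v | C v = i}

/-- `G` vertex-arrows `(F1, F2)`. -/
def VArrows2 {α β γ : Type*} (G : SimpleGraph α) (F1 : SimpleGraph β) (F2 : SimpleGraph γ) :
    Prop :=
  ∀ C : α → Bool, Copies G F1 {v | C v = true} ∨ Copies G F2 {v | C v = false}

/-- `G` edge-arrows `(F1, F2)`: every red subgraph `R ≤ G` yields a red `F1` or a blue `F2`. -/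
def EArrows2 {α β γ : Type*} (G : SimpleGraph α) (F1 : SimpleGraph β) (F2 : SimpleGraph γ) :
    Prop :=
  ∀ R : SimpleGraph α, R ≤ G → Copies R F1 Set.univ ∨ Copies (G \ R) F2 Set.univ

/-- Vertex Folkman number for a family of target graphs. -/
noncomputable def Fv {r : ℕ} {β : Fin r → Type*} (F : ∀ i, SimpleGraph (β i)) (k : ℕ) : ℕ :=
  sInf {n | ∃ G : SimpleGraph (Fin n), G.CliqueFree k ∧ VArrows G F}

/-- Two-color vertex Folkman number. -/
noncomputable def Fv2 {β γ : Type*} (F1 : SimpleGraph β) (F2 : SimpleGraph γ) (k : ℕ) : ℕ :=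
  sInf {n | ∃ G : SimpleGraph (Fin n), G.CliqueFree k ∧ VArrows2 G F1 F2}

/-- Two-color edge Folkman number. -/
noncomputable def Fe2 {β γ : Type*} (F1 : SimpleGraph β) (F2 : SimpleGraph γ) (k : ℕ) : ℕ :=
  sInf {n | ∃ G : SimpleGraph (Fin n), G.CliqueFree k ∧ EArrows2 G F1 F2}

/-- Lexicographic product `G[H]`. -/
def lexProd {α β : Type*} (G : SimpleGraph α) (H : SimpleGraph β) : SimpleGraph (α × β) where
  Adj x y := G.Adj x.1 y.1 ∨ (x.1 = y.1 ∧ H.Adj x.2 y.2)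
  symm := ⟨by rintro x y (h | ⟨e, h⟩); exacts [Or.inl h.symm, Or.inr ⟨e.symm, h.symm⟩]⟩
  loopless := ⟨by rintro x (h | ⟨_, h⟩); exacts [G.ne_of_adj h rfl, H.ne_of_adj h rfl]⟩

/-- Complete graph on `k` vertices. -/
def Kc (k : ℕ) : SimpleGraph (Fin k) := completeGraph (Fin k)

/-- `J_k = K_k - e`: complete graph on `k` vertices minus one edge (the one
joining the two distinguished right-hand vertices). -/
def Jgraph (k : ℕ) : SimpleGraph (Fin (k - 2) ⊕ Fin 2) where
  Adj x y := x ≠ y ∧ ¬(x.isRight ∧ y.isRight)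
  symm := ⟨fun x y ⟨h1, h2⟩ => ⟨h1.symm, fun ⟨a, b⟩ => h2 ⟨b, a⟩⟩⟩
  loopless := ⟨fun x h => h.1 rfl⟩

/-- Cycle on `n` vertices. -/
def cycle (n : ℕ) : SimpleGraph (ZMod n) where
  Adj i j := i ≠ j ∧ (i - j = 1 ∨ j - i = 1)
  symm := ⟨fun i j ⟨h1, h2⟩ => ⟨h1.symm, h2.symm⟩⟩
  loopless := ⟨fun i h => h.1 rfl⟩

/-- Join of two graphs: disjoint union plus all cross edges. -/
def graphJoin {α β : Type*} (G : SimpleGraph α) (H : SimpleGraph β) :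
    SimpleGraph (α ⊕ β) where
  Adj x y := (∃ a b, x = .inl a ∧ y = .inl b ∧ G.Adj a b) ∨
             (∃ a b, x = .inr a ∧ y = .inr b ∧ H.Adj a b) ∨
             (x.isLeft ∧ y.isRight) ∨ (x.isRight ∧ y.isLeft)
  symm := by
    constructor
    rintro x y (⟨a, b, rfl, rfl, h⟩ | ⟨a, b, rfl, rfl, h⟩ | ⟨h1, h2⟩ | ⟨h1, h2⟩)
    · exact Or.inl ⟨b, a, rfl, rfl, h.symm⟩
    · exact Or.inr (Or.inl ⟨b, a, rfl, rfl, h.symm⟩)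
    · exact Or.inr (Or.inr (Or.inr ⟨h2, h1⟩))
    · exact Or.inr (Or.inr (Or.inl ⟨h2, h1⟩))
  loopless := by
    constructor
    rintro x (⟨a, b, rfl, h, h'⟩ | ⟨a, b, rfl, h, h'⟩ | ⟨h1, h2⟩ | ⟨h1, h2⟩)
    · cases h; exact G.ne_of_adj h' rfl
    · cases h; exact H.ne_of_adj h' rfl
    · cases x <;> simp_all
    · cases x <;> simp_all

/-- Clique number: the largest size of a clique. -/
noncomputable def cliqueNum' {α : Type*} (G : SimpleGraph α) : ℕ :=
  sSup {n | ∃ s : Finset α, G.IsNClique n s}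

/-!
Colour each vertex `x` of `H` by the colour of the edge joining it to the apex of `K_1`. This
yields a monochromatic `K_{2,2,3}`, say red, all of whose vertices are red neighbours of the apex.
If its red edges contain a path `a - b - c`, then the apex, `b`, `a`, `c` span a red `J_4`.
Otherwise its red edges form a matching, and a counting argument gives `z`, `w` in the two parts
of size 2 and `x ≠ y` in the part of size 3 spanning no red edge of `K_{2,2,3}`; these four
vertices span a blue `J_4`. The join is `K_5`-free because a clique of `K_1 + H` meets `K_1` in at
most one vertex. Applying all this to a smallest vertex-Folkman graph gives the bound on `F_e`.
-/

open Sum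

section Join

variable {α β : Type*} {G : SimpleGraph α} {H : SimpleGraph β}

@[simp]
theorem graphJoin_adj_inl_inl {a b : α} : (graphJoin G H).Adj (inl a) (inl b) ↔ G.Adj a b := by
  simp [graphJoin]

@[simp]
theorem graphJoin_adj_inr_inr {a b : β} : (graphJoin G H).Adj (inr a) (inr b) ↔ H.Adj a b := by
  simp [graphJoin]

theorem graphJoin_adj_inl_inr (a : α) (b : β) : (graphJoin G H).Adj (inl a) (inr b) := by
  simp [graphJoin]

theorem graphJoin_cliqueFree {a b : ℕ} (hG : G.CliqueFree (a + 1)) (hH : H.CliqueFree (b + 1)) :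
    (graphJoin G H).CliqueFree (a + b + 1) := by
  intro s hs
  have hL : G.IsClique (s.toLeft : Set α) := fun x hx y hy hxy => by
    simpa using hs.isClique (Finset.mem_toLeft.1 hx) (Finset.mem_toLeft.1 hy) (by simpa using hxy)
  have hR : H.IsClique (s.toRight : Set β) := fun x hx y hy hxy => by
    simpa using hs.isClique (Finset.mem_toRight.1 hx) (Finset.mem_toRight.1 hy) (by simpa using hxy)
  have hcard := Finset.card_toLeft_add_card_toRight (u := s)
  rw [hs.card_eq] at hcard
  rcases le_or_gt (a + 1) s.toLeft.card with h | h
  · exact hG.mono h _ ⟨hL, rfl⟩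
  · exact hH.mono (by omega) _ ⟨hR, rfl⟩

end Join

section Copies

variable {α α' β : Type*} {G : SimpleGraph α} {G' : SimpleGraph α'} {F : SimpleGraph β}
  {S : Set α} {S' : Set α'}

theorem Copies.map (h : Copies G F S) (φ : α ↪ α') (hφ : ∀ a b, G.Adj a b → G'.Adj (φ a) (φ b))
    (hS : S ⊆ φ ⁻¹' S') : Copies G' F S' := by
  obtain ⟨f, hf, hfS⟩ := h
  exact ⟨f.trans φ, fun a b hab => hφ _ _ (hf a b hab), fun a => hS (hfS a)⟩

theorem copies_jgraph_four {p q x y : α} (hpq : G.Adj p q) (hpx : G.Adj p x) (hpy : G.Adj p y)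
    (hqx : G.Adj q x) (hqy : G.Adj q y) (hxy : x ≠ y) : Copies G (Jgraph 4) Set.univ := by
  let f : Fin 2 ⊕ Fin 2 → α := Sum.elim ![p, q] ![x, y]
  have hf : ∀ a b, (Jgraph 4).Adj a b → G.Adj (f a) (f b) := by
    rintro (a | a) (b | b) hab <;> fin_cases a <;> fin_cases b <;>
      simp_all [f, Jgraph, G.adj_comm]
  have hinj : f.Injective := by
    rintro (a | a) (b | b) hab <;> fin_cases a <;> fin_cases b <;>
      simp_all [f, hpq.ne, hpx.ne, hpy.ne, hqx.ne, hqy.ne, hpq.ne', hpx.ne', hpy.ne', hqx.ne',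
        hqy.ne', hxy.symm]
  exact ⟨⟨f, hinj⟩, hf, fun _ => trivial⟩

end Copies

abbrev K223Vertex : Type := Σ i : Fin 3, Fin (![2, 2, 3] i)

abbrev K223 : SimpleGraph K223Vertex :=
  completeMultipartiteGraph fun i : Fin 3 => Fin (![2, 2, 3] i)

namespace K223

def partA (z : Fin 2) : K223Vertex := ⟨0, z⟩

def partB (w : Fin 2) : K223Vertex := ⟨1, w⟩

def partC (c : Fin 3) : K223Vertex := ⟨2, c⟩

@[simp] theorem partA_fst (z : Fin 2) : (partA z).1 = 0 := rfl

@[simp] theorem partB_fst (w : Fin 2) : (partB w).1 = 1 := rfl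

@[simp] theorem partC_fst (c : Fin 3) : (partC c).1 = 2 := rfl

theorem partA_injective : Function.Injective partA := fun _ _ h => eq_of_heq (Sigma.mk.inj h).2

theorem partB_injective : Function.Injective partB := fun _ _ h => eq_of_heq (Sigma.mk.inj h).2

theorem partC_injective : Function.Injective partC := fun _ _ h => eq_of_heq (Sigma.mk.inj h).2

theorem adj_of_fst_ne {u v : K223Vertex} (h : u.1 ≠ v.1) : K223.Adj u v := h

variable {S : SimpleGraph K223Vertex}

theorem exists_partC_nonadj (hS : ∀ ⦃a b c⦄, S.Adj a b → S.Adj b c → a = c)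
    (v : K223Vertex) : ∃ k : Fin 3, ∀ c, c ≠ k → ¬S.Adj v (partC c) := by
  by_cases h : ∃ k : Fin 3, S.Adj v (partC k)
  · obtain ⟨k, hk⟩ := h
    exact ⟨k, fun c hck hc => hck (partC_injective (hS hc.symm hk))⟩
  · push Not at h
    exact ⟨0, fun c _ => h c⟩

theorem exists_partA_or_partB_nonadj_partC (hS : ∀ ⦃a b c⦄, S.Adj a b → S.Adj b c → a = c) :
    (∃ z, ∀ c, ¬S.Adj (partA z) (partC c)) ∨ ∃ w, ∀ c, ¬S.Adj (partB w) (partC c) := by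
  -- otherwise the four vertices of the two parts of size 2 are matched injectively into `partC`
  by_contra! h
  obtain ⟨hA, hB⟩ := h
  choose gA hgA using hA
  choose gB hgB using hB
  let vtx : Fin 2 ⊕ Fin 2 → K223Vertex := Sum.elim partA partB
  let g : Fin 2 ⊕ Fin 2 → Fin 3 := Sum.elim gA gB
  have hg : ∀ a, S.Adj (vtx a) (partC (g a)) := by
    rintro (z | w)
    exacts [hgA z, hgB w]
  have hinj : g.Injective := by
    intro a b hab
    have hv := hS (hg a) (hab ▸ hg b).symm
    rcases a with a | a <;> rcases b with b | b <;>
      simp only [vtx, Sum.elim_inl, Sum.elim_inr] at hv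
    · rw [partA_injective hv]
    · simpa using congrArg Sigma.fst hv
    · simpa using congrArg Sigma.fst hv
    · rw [partB_injective hv]
  simpa using Fintype.card_le_of_injective g hinj

theorem exists_partA_partB_partC_nonadj (hS : ∀ ⦃a b c⦄, S.Adj a b → S.Adj b c → a = c) :
    ∃ z w k, ¬S.Adj (partA z) (partB w) ∧
      ∀ c, c ≠ k → ¬S.Adj (partA z) (partC c) ∧ ¬S.Adj (partB w) (partC c) := by
  by_cases hAB : ∃ z w, S.Adj (partA z) (partB w)
  · obtain ⟨z, w, hzw⟩ := hAB
    obtain ⟨k, hk⟩ := exists_partC_nonadj hS (partB (w + 1))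
    -- the only `S`-neighbour of `partA z` is `partB w`
    refine ⟨z, w + 1, k, fun h => ?_, fun c hc => ⟨fun h => ?_, hk c hc⟩⟩
    · have := partB_injective (hS hzw.symm h)
      omega
    · simpa using congrArg Sigma.fst (hS hzw.symm h)
  · push Not at hAB
    rcases exists_partA_or_partB_nonadj_partC hS with ⟨z, hz⟩ | ⟨w, hw⟩
    · obtain ⟨k, hk⟩ := exists_partC_nonadj hS (partB 0)
      exact ⟨z, 0, k, hAB z 0, fun c hc => ⟨hz c, hk c hc⟩⟩
    · obtain ⟨k, hk⟩ := exists_partC_nonadj hS (partA 0)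
      exact ⟨0, w, k, hAB 0 w, fun c hc => ⟨hk c hc, hw c⟩⟩

theorem sdiff_copies_jgraph_four (hS : ∀ ⦃a b c⦄, S.Adj a b → S.Adj b c → a = c) :
    Copies (K223 \ S) (Jgraph 4) Set.univ := by
  obtain ⟨z, w, k, hzw, hC⟩ := exists_partA_partB_partC_nonadj hS
  have hpair : ∀ k : Fin 3, ∃ c c' : Fin 3, c ≠ c' ∧ c ≠ k ∧ c' ≠ k := by decide
  obtain ⟨c, c', hcc', hc, hc'⟩ := hpair k
  have hadj {u v : K223Vertex} (huv : u.1 ≠ v.1) (hS : ¬S.Adj u v) : (K223 \ S).Adj u v :=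
    ⟨adj_of_fst_ne huv, hS⟩
  exact copies_jgraph_four (hadj (by simp) hzw) (hadj (by simp) (hC c hc).1)
    (hadj (by simp) (hC c' hc').1) (hadj (by simp) (hC c hc).2)
    (hadj (by simp) (hC c' hc').2) (partC_injective.ne hcc')

theorem exists_path_or_sdiff_copies_jgraph_four (S : SimpleGraph K223Vertex) :
    (∃ a b c, a ≠ c ∧ S.Adj a b ∧ S.Adj b c) ∨ Copies (K223 \ S) (Jgraph 4) Set.univ := by
  refine or_iff_not_imp_left.2 fun h => sdiff_copies_jgraph_four fun a b c hab hbc => ?_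
  by_contra hac
  exact h ⟨a, b, c, hac, hab, hbc⟩

end K223

theorem copies_jgraph_four_of_apex {V : Type*} {G T : SimpleGraph V} (u : V) (f : K223Vertex ↪ V)
    (hf : ∀ a b, K223.Adj a b → G.Adj (f a) (f b)) (hu : ∀ a, T.Adj u (f a)) :
    Copies T (Jgraph 4) Set.univ ∨ Copies (G \ T) (Jgraph 4) Set.univ := by
  rcases K223.exists_path_or_sdiff_copies_jgraph_four (T.comap f) with ⟨a, b, c, hac, hab, hbc⟩ | h
  · exact .inl (copies_jgraph_four (hu b) (hu a) (hu c) hab.symm hbc (f.injective.ne hac))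
  · exact .inr (h.map f (fun a b hab => ⟨hf a b hab.1, hab.2⟩) fun _ _ => trivial)

theorem graphJoin_eArrows2_jgraph_four {α β : Type*} [Nonempty α] (G : SimpleGraph α)
    {H : SimpleGraph β} (hH : VArrows2 H K223 K223) :
    EArrows2 (graphJoin G H) (Jgraph 4) (Jgraph 4) := by
  classical
  intro R hR
  obtain ⟨u⟩ := ‹Nonempty α›
  have hinr (f : K223Vertex ↪ β) (hf : ∀ a b, K223.Adj a b → H.Adj (f a) (f b)) :
      ∀ a b, K223.Adj a b → (graphJoin G H).Adj (f.trans .inr a) (f.trans .inr b) :=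
    fun a b hab => graphJoin_adj_inr_inr.2 (hf a b hab)
  rcases hH fun x => decide (R.Adj (inl u) (inr x)) with ⟨f, hf, hred⟩ | ⟨f, hf, hblue⟩
  · exact copies_jgraph_four_of_apex (inl u) (f.trans .inr) (hinr f hf)
      fun a => by simpa using hred a
  · have := copies_jgraph_four_of_apex (T := graphJoin G H \ R) (inl u) (f.trans .inr) (hinr f hf)
      fun a => ⟨graphJoin_adj_inl_inr u (f a), by simpa using hblue a⟩
    rwa [sdiff_sdiff_right_self, inf_eq_right.2 hR, or_comm] at this

section Transport

variable {α α' β γ : Type*} {G : SimpleGraph α} {G' : SimpleGraph α'} {F₁ : SimpleGraph β}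
  {F₂ : SimpleGraph γ}

theorem VArrows2.of_iso (e : G ≃g G') (h : VArrows2 G F₁ F₂) : VArrows2 G' F₁ F₂ := fun C =>
  (h (C ∘ e)).imp (·.map e.toEmbedding.toEmbedding (fun _ _ => e.map_adj_iff.2) fun _ => id)
    (·.map e.toEmbedding.toEmbedding (fun _ _ => e.map_adj_iff.2) fun _ => id)

theorem EArrows2.of_iso (e : G ≃g G') (h : EArrows2 G F₁ F₂) : EArrows2 G' F₁ F₂ := by
  intro R hR
  refine (h (R.comap e) fun a b hab => e.map_adj_iff.1 (hR hab)).imp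
    (·.map e.toEmbedding.toEmbedding (fun _ _ => id) fun _ => id)
    (·.map e.toEmbedding.toEmbedding (fun _ _ hab => ⟨e.map_adj_iff.2 hab.1, hab.2⟩) fun _ => id)

end Transport

section FolkmanNumbers

variable {V β γ : Type*} [Fintype V] {G : SimpleGraph V} {F₁ : SimpleGraph β}
  {F₂ : SimpleGraph γ} {k : ℕ}

theorem Fe2_le_card (hG : G.CliqueFree k) (hA : EArrows2 G F₁ F₂) :
    Fe2 F₁ F₂ k ≤ Fintype.card V :=
  let e := Iso.comap (Fintype.equivFin V).symm G
  Nat.sInf_le ⟨_, hG.comap e.isContained, hA.of_iso e.symm⟩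

theorem exists_graph_on_Fv2 (hG : G.CliqueFree k) (hA : VArrows2 G F₁ F₂) :
    ∃ G' : SimpleGraph (Fin (Fv2 F₁ F₂ k)), G'.CliqueFree k ∧ VArrows2 G' F₁ F₂ := by
  let e := Iso.comap (Fintype.equivFin V).symm G
  exact Nat.sInf_mem (s := {n | ∃ G' : SimpleGraph (Fin n), G'.CliqueFree k ∧ VArrows2 G' F₁ F₂})
    ⟨Fintype.card V, _, hG.comap e.isContained, hA.of_iso e.symm⟩

end FolkmanNumbers

/-- If `H` is `K_4`-free and vertex-arrows `(K_{2,2,3},K_{2,2,3})`, then `K_1 + H` is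
`K_5`-free and edge-arrows `(J_4,J_4)`; consequently
`F_e(J_4,J_4;5) ≤ 1 + F_v(K_{2,2,3},K_{2,2,3};4)`. -/
theorem join_K1_edge_arrows_J4 {α : Type*} [Fintype α] (H : SimpleGraph α)
    (hfree : H.CliqueFree 4)
    (harr : VArrows2 H (completeMultipartiteGraph (fun i : Fin 3 => Fin (![2, 2, 3] i)))
      (completeMultipartiteGraph (fun i : Fin 3 => Fin (![2, 2, 3] i)))) :
    (graphJoin (Kc 1) H).CliqueFree 5 ∧
    EArrows2 (graphJoin (Kc 1) H) (Jgraph 4) (Jgraph 4) ∧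
    Fe2 (Jgraph 4) (Jgraph 4) 5 ≤
      1 + Fv2 (completeMultipartiteGraph (fun i : Fin 3 => Fin (![2, 2, 3] i)))
        (completeMultipartiteGraph (fun i : Fin 3 => Fin (![2, 2, 3] i))) 4 := by
  have hK1 : (Kc 1).CliqueFree 2 := cliqueFree_of_card_lt (by simp)
  obtain ⟨G', hfree', harr'⟩ := exists_graph_on_Fv2 hfree harr
  refine ⟨graphJoin_cliqueFree (a := 1) (b := 3) hK1 hfree,
    graphJoin_eArrows2_jgraph_four _ harr, ?_⟩
  calc Fe2 (Jgraph 4) (Jgraph 4) 5 ≤ Fintype.card (Fin 1 ⊕ Fin (Fv2 K223 K223 4)) :=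
        Fe2_le_card (graphJoin_cliqueFree (a := 1) (b := 3) hK1 hfree')
          (graphJoin_eArrows2_jgraph_four _ harr')
    _ = 1 + Fv2 K223 K223 4 := by simp
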